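/- The radial function u(r,t) = a₀/(1 − 48 a₀ t) · r⁴ + (4/3) ln(1 − 48 a₀ t), defined for r ≥ 0 and t with 1 − 48 a₀ t > 0, satisfies the radial equation uₜ = (u_r u_{rr})/r − Δ_r² u for r > 0, where Δ_r v = (1/r)(r v_r)_r. -/

import Mathlib

/-!
For fixed `t` the solution is `c r⁴ + d` with `c = a₀ / (1 - 48 a₀ t)`. The radial Laplacian
sends `c rⁿ⁺²` to `(n + 2)² c rⁿ`, so `Δᵣ² u = 64 c`, while `uᵣ uᵣᵣ / r = 48 c² r⁴`;
and `uₜ = 48 c² r⁴ - 64 c` because `∂ₜ c = 48 c²`.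
-/

noncomputable section

/-- The explicit radial solution on the unit disc. -/
def U (a₀ r t : ℝ) : ℝ :=
  a₀ / (1 - 48 * a₀ * t) * r ^ 4 + (4 / 3) * Real.log (1 - 48 * a₀ * t)

/-- The two-dimensional radial Laplacian `Δᵣ v = (1/r)(r vᵣ)ᵣ`. -/
def radLap (v : ℝ → ℝ) (r : ℝ) : ℝ :=
  (1 / r) * deriv (fun s => s * deriv v s) r

open Filter Topology

theorem radLap_congr_of_eventuallyEq {v w : ℝ → ℝ} {r : ℝ} (h : v =ᶠ[𝓝 r] w) :
    radLap v r = radLap w r := by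
  have hflux : (fun s => s * deriv v s) =ᶠ[𝓝 r] fun s => s * deriv w s := by
    filter_upwards [h.eventuallyEq_nhds] with s hs
    rw [hs.deriv_eq]
  rw [radLap, radLap, hflux.deriv_eq]

theorem radLap_add_const (v : ℝ → ℝ) (d : ℝ) : radLap (fun s => v s + d) = radLap v := by
  funext r
  simp only [radLap, deriv_add_const]

theorem radLap_const_mul_pow (c : ℝ) (n : ℕ) {r : ℝ} (hr : r ≠ 0) :
    radLap (fun s => c * s ^ (n + 2)) r = c * (n + 2) ^ 2 * r ^ n := by
  have hflux : (fun s => s * deriv (fun s => c * s ^ (n + 2)) s) =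
      fun s => c * (n + 2) * s ^ (n + 2) := by
    funext s
    simp only [deriv_const_mul_field', deriv_pow_field]
    push_cast
    ring
  rw [radLap, hflux]
  simp only [deriv_const_mul_field', deriv_pow_field]
  field_simp
  push_cast
  ring

theorem radLap_radLap_quartic (c d : ℝ) {r : ℝ} (hr : r ≠ 0) :
    radLap (radLap (fun s => c * s ^ 4 + d)) r = 64 * c := by
  have hlap : radLap (fun s => c * s ^ 4 + d) =ᶠ[𝓝 r] fun s => 16 * c * s ^ (0 + 2) := by
    filter_upwards [eventually_ne_nhds hr] with s hs
    rw [radLap_add_const, radLap_const_mul_pow c 2 hs]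
    ring
  rw [radLap_congr_of_eventuallyEq hlap, radLap_const_mul_pow _ 0 hr]
  ring

theorem hasDerivAt_U_time (a₀ r : ℝ) {t : ℝ} (ht : 1 - 48 * a₀ * t ≠ 0) :
    HasDerivAt (fun s => U a₀ r s)
      (48 * a₀ ^ 2 * r ^ 4 / (1 - 48 * a₀ * t) ^ 2 - 64 * a₀ / (1 - 48 * a₀ * t)) t := by
  have hg : HasDerivAt (fun s => 1 - 48 * a₀ * s) (-(48 * a₀)) t := by
    simpa using ((hasDerivAt_id t).const_mul (48 * a₀)).const_sub 1
  refine ((((hasDerivAt_const t a₀).div hg ht).mul_const (r ^ 4)).add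
    ((hg.log ht).const_mul (4 / 3))).congr_deriv ?_
  field_simp
  ring

/-- The explicit radial solution satisfies `uₜ = uᵣ uᵣᵣ / r − Δᵣ² u` for `r > 0` and
`1 − 48a₀t > 0`. -/
theorem stmt4 (a₀ r t : ℝ) (hr : r > 0) (ht : 1 - 48 * a₀ * t > 0) :
    deriv (fun s => U a₀ r s) t =
      (deriv (fun r' => U a₀ r' t) r * iteratedDeriv 2 (fun r' => U a₀ r' t) r) / r -
        radLap (radLap (fun r' => U a₀ r' t)) r := by
  set c := a₀ / (1 - 48 * a₀ * t)
  set d := 4 / 3 * Real.log (1 - 48 * a₀ * t)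
  have hu : (fun r' => U a₀ r' t) = fun s => c * s ^ 4 + d := rfl
  have hdu : deriv (fun s => c * s ^ 4 + d) = fun s => 4 * c * s ^ 3 := by
    funext s
    simp only [deriv_add_const, deriv_const_mul_field', deriv_pow_field]
    norm_num
    ring
  have hd2u : deriv (fun s => 4 * c * s ^ 3) r = 12 * c * r ^ 2 := by
    simp only [deriv_const_mul_field', deriv_pow_field]
    norm_num
    ring
  rw [(hasDerivAt_U_time a₀ r ht.ne').deriv, hu, radLap_radLap_quartic c d hr.ne',
    iteratedDeriv_succ, iteratedDeriv_one, hdu, hd2u]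
  simp only [c]
  field_simp
  ring
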